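/- (Theorem 2, plug-in achievability part.) For every ε > 0 there exists a constant C > 0 such that for all S ≥ 2 and all n ≥ C · S², the empirical (plug-in) mutual information satisfies sup over all joint pmfs P on [S]×[S] of E_{Z^n ~ P^{⊗n}}[(I(P̂_n) − I(P))²] ≤ ε, where P̂_n is the empirical joint distribution of the n samples. That is, n = O(S²) samples suffice for the empirical mutual information to be consistent, uniformly over all joint pmfs. -/

import Mathlib

/-- Shannon entropy of a pmf `P` on a finite alphabet, with natural logarithm and the
convention `0 ln 0 = 0`. -/
noncomputable def entropy {A : Type*} [Fintype A] (P : A → ℝ) : ℝ :=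
  ∑ a, -(P a * Real.log (P a))

/-- Mutual information of a joint pmf `P` on `A × B`: `I(P) = H(P1) + H(P2) − H(P)`. -/
noncomputable def mutualInfo {A B : Type*} [Fintype A] [Fintype B] (P : A × B → ℝ) : ℝ :=
  entropy (fun a => ∑ b, P (a, b)) + entropy (fun b => ∑ a, P (a, b)) - entropy P

/-- Expectation of `f(Z^n)` when `Z^n = (Z_1,…,Z_n)` is drawn i.i.d. from the pmf `P`. -/
noncomputable def expectIID {A : Type*} [Fintype A] {n : ℕ} (P : A → ℝ)
    (f : (Fin n → A) → ℝ) : ℝ :=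
  ∑ z : Fin n → A, (∏ k, P (z k)) * f z

/-- `P` is a probability mass function on the finite alphabet `A`. -/
def IsPmf {A : Type*} [Fintype A] (P : A → ℝ) : Prop :=
  (∀ a, 0 ≤ P a) ∧ ∑ a, P a = 1

/-- Empirical distribution of the sample `z = (z_1,…,z_n)`:
`P̂_n(a) = (1/n) Σ_{k=1}^n 1{z_k = a}`. -/
noncomputable def empDist {A : Type*} [Fintype A] [DecidableEq A] {n : ℕ}
    (z : Fin n → A) : A → ℝ :=
  fun a => (∑ k, if z k = a then (1 : ℝ) else 0) / n

/-!
For a pmf `P` and its empirical version `P̂`, `H(P) - H(P̂) = D(P̂ ‖ P) + ∑ₐ (P̂ a - P a) log P a`.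
The divergence is at most `log (1 + χ²(P̂ ‖ P)) ≤ 2 √χ²`, and `E χ² ≤ |A| / n`; the linear term is
an average of `n` centred i.i.d. variables, of variance at most `E[log² P(Z)] / n ≤ 4 |A| / n`.
Hence `E (H(P̂) - H(P))² ≤ 16 |A| / n`. Mutual information is a signed sum of the entropies of the
two marginals and of the joint pmf, and the marginals of `P̂` are the empirical distributions of
the projected samples, so the mean squared error of `I(P̂)` is `O(S² / n)`.
-/

open Finset

section ExpectIID

variable {A : Type*} [Fintype A] {n : ℕ}

lemma expectIID_add (P : A → ℝ) (F G : (Fin n → A) → ℝ) :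
    expectIID P (fun z => F z + G z) = expectIID P F + expectIID P G := by
  simp only [expectIID, mul_add, sum_add_distrib]

lemma expectIID_const_mul (P : A → ℝ) (c : ℝ) (F : (Fin n → A) → ℝ) :
    expectIID P (fun z => c * F z) = c * expectIID P F := by
  simp only [expectIID, mul_sum, mul_left_comm]

lemma expectIID_div_const (P : A → ℝ) (F : (Fin n → A) → ℝ) (c : ℝ) :
    expectIID P (fun z => F z / c) = expectIID P F / c := by
  simp only [expectIID, sum_div, mul_div_assoc]

lemma expectIID_sum {ι : Type*} (P : A → ℝ) (s : Finset ι) (F : ι → (Fin n → A) → ℝ) :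
    expectIID P (fun z => ∑ i ∈ s, F i z) = ∑ i ∈ s, expectIID P (F i) := by
  simp only [expectIID, mul_sum]
  exact sum_comm

lemma expectIID_mono {P : A → ℝ} (hP : ∀ a, 0 ≤ P a) {F G : (Fin n → A) → ℝ}
    (h : ∀ z, (∀ k, P (z k) ≠ 0) → F z ≤ G z) : expectIID P F ≤ expectIID P G := by
  unfold expectIID
  refine sum_le_sum fun z _ => ?_
  by_cases hz : ∀ k, P (z k) ≠ 0
  · exact mul_le_mul_of_nonneg_left (h z hz) (prod_nonneg fun k _ => hP (z k))
  · obtain ⟨k, hk⟩ := not_forall_not.mp hz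
    rw [prod_eq_zero (mem_univ k) hk]
    simp

lemma expectIID_prod (P : A → ℝ) (g : Fin n → A → ℝ) :
    expectIID P (fun z => ∏ k, g k (z k)) = ∏ k, ∑ a, P a * g k a := by
  simp only [expectIID, ← prod_mul_distrib]
  rw [prod_univ_sum, Fintype.piFinset_univ]

lemma expectIID_apply {P : A → ℝ} (hP : ∑ a, P a = 1) (g : A → ℝ) (k : Fin n) :
    expectIID P (fun z => g (z k)) = ∑ a, P a * g a := by
  have := expectIID_prod P (fun j a => if j = k then g a else 1)
  simp_all

lemma expectIID_apply_mul_apply {P : A → ℝ} (hP : ∑ a, P a = 1) (g h : A → ℝ) {k l : Fin n}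
    (hkl : k ≠ l) :
    expectIID P (fun z => g (z k) * h (z l)) = (∑ a, P a * g a) * (∑ a, P a * h a) := by
  have := expectIID_prod P (fun j a => if j = k then g a else if j = l then h a else 1)
  rw [Fintype.prod_eq_mul k l hkl (by simp +contextual [hP])] at this
  have hlk : l ≠ k := hkl.symm
  simp only [if_pos, if_neg hlk] at this
  rw [← this]
  congr 1 with z
  rw [Fintype.prod_eq_mul k l hkl (by simp +contextual)]
  simp [hlk]

lemma expectIID_sq_sum_of_centered {P : A → ℝ} (hP : ∑ a, P a = 1) {φ : A → ℝ}
    (hφ : ∑ a, P a * φ a = 0) :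
    expectIID P (fun z : Fin n → A => (∑ k, φ (z k)) ^ 2) = n * ∑ a, P a * φ a ^ 2 := by
  have hcross : ∀ k l : Fin n, expectIID P (fun z => φ (z k) * φ (z l)) =
      if k = l then ∑ a, P a * φ a ^ 2 else 0 := by
    intro k l
    split_ifs with hkl
    · subst hkl
      exact (expectIID_apply hP (fun a => φ a * φ a) k).trans (by simp only [sq])
    · rw [expectIID_apply_mul_apply hP φ φ hkl, hφ, zero_mul]
  simp only [sq, sum_mul_sum, expectIID_sum, hcross, sum_ite_eq, mem_univ, if_true, sum_const,
    card_univ, Fintype.card_fin, nsmul_eq_mul]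

lemma sum_mul_sub_sq {P : A → ℝ} (hP : ∑ a, P a = 1) (f : A → ℝ) :
    ∑ a, P a * (f a - ∑ b, P b * f b) ^ 2 = ∑ a, P a * f a ^ 2 - (∑ a, P a * f a) ^ 2 := by
  set μ := ∑ b, P b * f b
  have hexpand : ∀ a, P a * (f a - μ) ^ 2 = P a * f a ^ 2 - 2 * μ * (P a * f a) + μ ^ 2 * P a :=
    fun a => by ring
  simp only [hexpand, sum_add_distrib, sum_sub_distrib, ← mul_sum, hP]
  ring

end ExpectIID

section EmpDist

variable {A : Type*} [Fintype A] [DecidableEq A] {n : ℕ}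

lemma empDist_nonneg (z : Fin n → A) (a : A) : 0 ≤ empDist z a :=
  div_nonneg (sum_nonneg fun k _ => by positivity) n.cast_nonneg

lemma sum_empDist_mul (z : Fin n → A) (f : A → ℝ) :
    ∑ a, empDist z a * f a = (∑ k, f (z k)) / n := by
  simp only [empDist, div_mul_eq_mul_div, ← sum_div, sum_mul, ite_mul, one_mul, zero_mul]
  rw [sum_comm]
  simp

lemma sum_empDist (hn : 0 < n) (z : Fin n → A) : ∑ a, empDist z a = 1 := by
  simpa [hn.ne'] using sum_empDist_mul z 1

lemma exists_eq_of_empDist_ne_zero (z : Fin n → A) {a : A} (h : empDist z a ≠ 0) :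
    ∃ k, z k = a := by
  by_contra! hz
  simp [empDist, hz] at h

lemma sum_empDist_sub_mul (P : A → ℝ) (hn : 0 < n) (z : Fin n → A) (f : A → ℝ) :
    ∑ a, (empDist z a - P a) * f a = (∑ k, (f (z k) - ∑ a, P a * f a)) / n := by
  simp only [sub_mul, sum_sub_distrib, sum_empDist_mul, sum_const, card_univ, Fintype.card_fin,
    nsmul_eq_mul]
  field_simp

lemma expectIID_sq_sum_empDist_sub_mul_le {P : A → ℝ} (hP : ∑ a, P a = 1) (hn : 0 < n)
    (f : A → ℝ) :
    expectIID P (fun z : Fin n → A => (∑ a, (empDist z a - P a) * f a) ^ 2) ≤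
      (∑ a, P a * f a ^ 2) / n := by
  have hn' : (0 : ℝ) < n := Nat.cast_pos.mpr hn
  have hcentered : ∑ a, P a * (f a - ∑ b, P b * f b) = 0 := by
    simp only [mul_sub, sum_sub_distrib, ← sum_mul, hP, one_mul, sub_self]
  simp only [sum_empDist_sub_mul P hn, div_pow]
  rw [expectIID_div_const, expectIID_sq_sum_of_centered hP hcentered, sum_mul_sub_sq hP]
  rw [sq (n : ℝ), mul_div_mul_left _ _ hn'.ne']
  gcongr
  exact sub_le_self _ (sq_nonneg _)

lemma expectIID_sq_empDist_sub_le {P : A → ℝ} (hP : ∑ a, P a = 1) (hn : 0 < n) (a : A) :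
    expectIID P (fun z : Fin n → A => (empDist z a - P a) ^ 2) ≤ P a / n := by
  simpa [mul_ite] using expectIID_sq_sum_empDist_sub_mul_le hP hn (fun b => if b = a then 1 else 0)

end EmpDist

section Divergence

variable {A : Type*} [Fintype A]

noncomputable def relEntropy (Q P : A → ℝ) : ℝ :=
  ∑ a, Q a * (Real.log (Q a) - Real.log (P a))

/-- Terms with `P a = 0` vanish, since `x / 0 = 0`. -/
noncomputable def chiSq (Q P : A → ℝ) : ℝ :=
  ∑ a, (Q a - P a) ^ 2 / P a

lemma entropy_sub_entropy (Q P : A → ℝ) :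
    entropy Q - entropy P = -relEntropy Q P - ∑ a, (Q a - P a) * Real.log (P a) := by
  simp only [entropy, relEntropy, mul_sub, sub_mul, sum_neg_distrib, sum_sub_distrib]
  ring

variable {Q P : A → ℝ}

lemma relEntropy_nonneg (hQ : IsPmf Q) (hP : IsPmf P) (hQP : ∀ a, P a = 0 → Q a = 0) :
    0 ≤ relEntropy Q P := by
  have hterm : ∀ a, Q a - P a ≤ Q a * (Real.log (Q a) - Real.log (P a)) := by
    intro a
    rcases (hQ.1 a).eq_or_lt with hq | hq
    · simp [← hq, hP.1 a]
    have hp : 0 < P a := (hP.1 a).lt_of_ne fun h => hq.ne' (hQP a h.symm)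
    have h := Real.one_sub_inv_le_log_of_pos (div_pos hq hp)
    rw [Real.log_div hq.ne' hp.ne', inv_div] at h
    have := mul_le_mul_of_nonneg_left h hq.le
    rwa [mul_sub, mul_one, mul_div_cancel₀ _ hq.ne'] at this
  have := sum_le_sum fun a (_ : a ∈ univ) => hterm a
  rwa [sum_sub_distrib, hQ.2, hP.2, sub_self] at this

lemma relEntropy_le_log_one_add_chiSq (hQ : IsPmf Q) (hP : IsPmf P)
    (hQP : ∀ a, P a = 0 → Q a = 0) :
    relEntropy Q P ≤ Real.log (1 + chiSq Q P) := by
  -- Jensen for `log` with weights `Q` at the points `Q / P`, moved to `1` where `Q` vanishes.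
  set x : A → ℝ := fun a => if Q a = 0 then 1 else Q a / P a
  have hx_pos : ∀ a ∈ univ, x a ∈ Set.Ioi (0 : ℝ) := by
    intro a _
    by_cases hq : Q a = 0
    · simp [x, hq]
    · have hp : 0 < P a := (hP.1 a).lt_of_ne fun h => hq (hQP a h.symm)
      simpa [x, hq] using div_pos ((hQ.1 a).lt_of_ne (Ne.symm hq)) hp
  have hlog : ∀ a, Q a • Real.log (x a) = Q a * (Real.log (Q a) - Real.log (P a)) := by
    intro a
    by_cases hq : Q a = 0
    · simp [x, hq]
    · have hp : P a ≠ 0 := fun h => hq (hQP a h)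
      simp [x, hq, Real.log_div hq hp]
  have hmean : ∀ a, Q a • x a = (Q a - P a) ^ 2 / P a + (2 * Q a - P a) := by
    intro a
    by_cases hp : P a = 0
    · simp [x, hp, hQP a hp]
    · by_cases hq : Q a = 0 <;> simp only [x, hq, if_true, if_false, smul_eq_mul] <;>
        field_simp <;> ring
  have hjensen := StrictConcaveOn.concaveOn strictConcaveOn_log_Ioi |>.le_map_sum
    (fun a _ => hQ.1 a) hQ.2 hx_pos
  simp only [hlog, hmean, sum_add_distrib, sum_sub_distrib, ← mul_sum, hQ.2, hP.2] at hjensen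
  rw [relEntropy, chiSq]
  refine hjensen.trans_eq (congrArg Real.log ?_)
  ring

lemma log_one_add_le_two_mul_sqrt {x : ℝ} (hx : 0 ≤ x) : Real.log (1 + x) ≤ 2 * √x := by
  rw [Real.log_le_iff_le_exp (by positivity)]
  have := Real.quadratic_le_exp_of_nonneg (by positivity : 0 ≤ 2 * √x)
  nlinarith [Real.sq_sqrt hx, Real.sqrt_nonneg x]

lemma chiSq_nonneg (hP : ∀ a, 0 ≤ P a) : 0 ≤ chiSq Q P :=
  sum_nonneg fun a _ => div_nonneg (sq_nonneg _) (hP a)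

lemma sq_relEntropy_le (hQ : IsPmf Q) (hP : IsPmf P) (hQP : ∀ a, P a = 0 → Q a = 0) :
    relEntropy Q P ^ 2 ≤ 4 * chiSq Q P := by
  have hchi := chiSq_nonneg (Q := Q) hP.1
  have hupper := (relEntropy_le_log_one_add_chiSq hQ hP hQP).trans
    (log_one_add_le_two_mul_sqrt hchi)
  have hlower := relEntropy_nonneg hQ hP hQP
  nlinarith [Real.sq_sqrt hchi]

lemma sq_entropy_sub_entropy_le (hQ : IsPmf Q) (hP : IsPmf P) (hQP : ∀ a, P a = 0 → Q a = 0) :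
    (entropy Q - entropy P) ^ 2 ≤
      8 * chiSq Q P + 2 * (∑ a, (Q a - P a) * Real.log (P a)) ^ 2 := by
  rw [entropy_sub_entropy]
  nlinarith [sq_relEntropy_le hQ hP hQP,
    sq_nonneg (relEntropy Q P - ∑ a, (Q a - P a) * Real.log (P a))]

end Divergence

lemma IsPmf.le_one {A : Type*} [Fintype A] {P : A → ℝ} (hP : IsPmf P) (a : A) : P a ≤ 1 :=
  hP.2 ▸ single_le_sum (fun b _ => hP.1 b) (mem_univ a)

lemma mul_log_sq_le_four {p : ℝ} (h0 : 0 ≤ p) (h1 : p ≤ 1) : p * Real.log p ^ 2 ≤ 4 := by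
  rcases h0.eq_or_lt with rfl | hp
  · simp
  have hsqrt := Real.abs_log_mul_self_lt √p (Real.sqrt_pos.mpr hp) (Real.sqrt_le_one.mpr h1)
  have hlog : Real.log p = 2 * Real.log √p := by rw [Real.log_sqrt h0]; ring
  have : p * Real.log p ^ 2 = 4 * (Real.log √p * √p) ^ 2 := by
    rw [hlog]; nth_rw 1 [← Real.sq_sqrt h0]; ring
  rw [this, ← sq_abs]
  nlinarith [abs_nonneg (Real.log √p * √p)]

lemma expectIID_sq_entropy_empDist_sub_le {A : Type*} [Fintype A] [DecidableEq A] {P : A → ℝ}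
    (hP : IsPmf P) {n : ℕ} (hn : 0 < n) :
    expectIID P (fun z : Fin n → A => (entropy (empDist z) - entropy P) ^ 2) ≤
      16 * Fintype.card A / n := by
  set L : (Fin n → A) → ℝ := fun z => ∑ a, (empDist z a - P a) * Real.log (P a)
  have hpointwise : ∀ z : Fin n → A, (∀ k, P (z k) ≠ 0) →
      (entropy (empDist z) - entropy P) ^ 2 ≤ 8 * chiSq (empDist z) P + 2 * L z ^ 2 := by
    intro z hz
    refine sq_entropy_sub_entropy_le ⟨empDist_nonneg z, sum_empDist hn z⟩ hP fun a ha => ?_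
    by_contra hne
    obtain ⟨k, rfl⟩ := exists_eq_of_empDist_ne_zero z hne
    exact hz k ha
  have hchiSq : expectIID P (fun z : Fin n → A => chiSq (empDist z) P) ≤ Fintype.card A / n := by
    simp only [chiSq, expectIID_sum, expectIID_div_const]
    calc ∑ a, expectIID P (fun z => (empDist z a - P a) ^ 2) / P a
        ≤ ∑ a, P a / n / P a := by
          gcongr with a
          · exact hP.1 a
          · exact expectIID_sq_empDist_sub_le hP.2 hn a
      _ ≤ ∑ _a : A, 1 / (n : ℝ) := by
          refine sum_le_sum fun a _ => ?_
          rw [div_right_comm]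
          gcongr
          exact div_self_le_one _
      _ = Fintype.card A / n := by simp [div_eq_mul_inv]
  have hL : expectIID P (fun z => L z ^ 2) ≤ 4 * Fintype.card A / n := by
    refine (expectIID_sq_sum_empDist_sub_mul_le hP.2 hn _).trans ?_
    gcongr
    calc ∑ a, P a * Real.log (P a) ^ 2 ≤ ∑ _a : A, (4 : ℝ) :=
          sum_le_sum fun a _ => mul_log_sq_le_four (hP.1 a) (hP.le_one a)
      _ = 4 * Fintype.card A := by simp [mul_comm]
  calc expectIID P (fun z : Fin n → A => (entropy (empDist z) - entropy P) ^ 2)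
      ≤ expectIID P (fun z => 8 * chiSq (empDist z) P + 2 * L z ^ 2) :=
        expectIID_mono hP.1 hpointwise
    _ = 8 * expectIID P (fun z => chiSq (empDist z) P) + 2 * expectIID P (fun z => L z ^ 2) := by
        rw [expectIID_add, expectIID_const_mul, expectIID_const_mul]
    _ ≤ 8 * (Fintype.card A / n) + 2 * (4 * Fintype.card A / n) := by gcongr
    _ = 16 * Fintype.card A / n := by ring

section PmfMap

variable {A B : Type*} [Fintype A] [Fintype B] [DecidableEq B] {n : ℕ}

def pmfMap (f : A → B) (P : A → ℝ) : B → ℝ :=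
  fun b => ∑ a with f a = b, P a

lemma isPmf_pmfMap (f : A → B) {P : A → ℝ} (hP : IsPmf P) : IsPmf (pmfMap f P) :=
  ⟨fun _ => sum_nonneg fun a _ => hP.1 a, (sum_fiberwise univ f P).trans hP.2⟩

lemma expectIID_comp (P : A → ℝ) (f : A → B) (F : (Fin n → B) → ℝ) :
    expectIID P (fun z => F (f ∘ z)) = expectIID (pmfMap f P) F := by
  unfold expectIID pmfMap
  rw [← sum_fiberwise univ (f ∘ ·)]
  refine sum_congr rfl fun w _ => ?_
  rw [prod_univ_sum, sum_mul]
  refine sum_congr (by ext z; simp [Fintype.mem_piFinset, funext_iff]) fun z hz => ?_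
  simp only [Fintype.mem_piFinset, mem_filter, mem_univ, true_and] at hz
  simp only [show f ∘ z = w from funext hz]

lemma empDist_comp [DecidableEq A] (f : A → B) (z : Fin n → A) :
    empDist (f ∘ z) = pmfMap f (empDist z) := by
  ext b
  simp only [empDist, pmfMap, ← sum_div]
  rw [sum_comm]
  simp

lemma mutualInfo_eq_entropy_pmfMap [DecidableEq A] (P : A × B → ℝ) :
    mutualInfo P = entropy (pmfMap Prod.fst P) + entropy (pmfMap Prod.snd P) - entropy P := by
  have hfst : pmfMap Prod.fst P = fun a => ∑ b, P (a, b) := by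
    ext a
    simp [pmfMap, sum_filter, Fintype.sum_prod_type_right]
  have hsnd : pmfMap Prod.snd P = fun b => ∑ a, P (a, b) := by
    ext b
    simp [pmfMap, sum_filter, Fintype.sum_prod_type]
  rw [hfst, hsnd, mutualInfo]

end PmfMap

lemma sq_add_sub_sub_add_sub_le (a b c a' b' c' : ℝ) :
    (a + b - c - (a' + b' - c')) ^ 2 ≤ 3 * (a - a') ^ 2 + 3 * (b - b') ^ 2 + 3 * (c - c') ^ 2 := by
  nlinarith [sq_nonneg (a - a' - (b - b')), sq_nonneg (a - a' + (c - c')),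
    sq_nonneg (b - b' + (c - c'))]

lemma expectIID_sq_entropy_empDist_comp_sub_le {A B : Type*} [Fintype A] [Fintype B]
    [DecidableEq A] [DecidableEq B] {P : A → ℝ} (hP : IsPmf P) {n : ℕ} (hn : 0 < n)
    (f : A → B) :
    expectIID P (fun z : Fin n → A => (entropy (empDist (f ∘ z)) - entropy (pmfMap f P)) ^ 2) ≤
      16 * Fintype.card B / n := by
  rw [expectIID_comp P f fun w => (entropy (empDist w) - entropy (pmfMap f P)) ^ 2]
  exact expectIID_sq_entropy_empDist_sub_le (isPmf_pmfMap f hP) hn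

lemma expectIID_sq_mutualInfo_empDist_sub_le {A B : Type*} [Fintype A] [Fintype B]
    [DecidableEq A] [DecidableEq B] {P : A × B → ℝ} (hP : IsPmf P) {n : ℕ} (hn : 0 < n) :
    expectIID P (fun z : Fin n → A × B => (mutualInfo (empDist z) - mutualInfo P) ^ 2) ≤
      48 * (Fintype.card A + Fintype.card B + Fintype.card A * Fintype.card B) / n := by
  have hsplit : ∀ z : Fin n → A × B, (mutualInfo (empDist z) - mutualInfo P) ^ 2 ≤
      3 * (entropy (empDist (Prod.fst ∘ z)) - entropy (pmfMap Prod.fst P)) ^ 2 +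
      3 * (entropy (empDist (Prod.snd ∘ z)) - entropy (pmfMap Prod.snd P)) ^ 2 +
      3 * (entropy (empDist z) - entropy P) ^ 2 := by
    intro z
    rw [mutualInfo_eq_entropy_pmfMap, mutualInfo_eq_entropy_pmfMap, ← empDist_comp,
      ← empDist_comp]
    exact sq_add_sub_sub_add_sub_le _ _ _ _ _ _
  calc expectIID P (fun z : Fin n → A × B => (mutualInfo (empDist z) - mutualInfo P) ^ 2)
      ≤ _ := expectIID_mono hP.1 fun z _ => hsplit z
    _ = 3 * expectIID P (fun z : Fin n → A × B =>
            (entropy (empDist (Prod.fst ∘ z)) - entropy (pmfMap Prod.fst P)) ^ 2) +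
          3 * expectIID P (fun z : Fin n → A × B =>
            (entropy (empDist (Prod.snd ∘ z)) - entropy (pmfMap Prod.snd P)) ^ 2) +
          3 * expectIID P (fun z : Fin n → A × B => (entropy (empDist z) - entropy P) ^ 2) := by
        simp only [expectIID_add, expectIID_const_mul]
    _ ≤ 3 * (16 * Fintype.card A / n) + 3 * (16 * Fintype.card B / n) +
          3 * (16 * Fintype.card (A × B) / n) := by
        gcongr
        · exact expectIID_sq_entropy_empDist_comp_sub_le hP hn Prod.fst
        · exact expectIID_sq_entropy_empDist_comp_sub_le hP hn Prod.snd
        · exact expectIID_sq_entropy_empDist_sub_le hP hn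
    _ = 48 * (Fintype.card A + Fintype.card B + Fintype.card A * Fintype.card B) / n := by
        rw [Fintype.card_prod, Nat.cast_mul]
        ring

/-- Plug-in achievability: for every `ε > 0` there is `C > 0` such that for all `S ≥ 2` and
all `n ≥ C S²`, the empirical (plug-in) mutual information `I(P̂_n)` has worst-case mean
squared error at most `ε` over all joint pmfs on `[S] × [S]`; i.e. `n = O(S²)` samples
suffice for the empirical mutual information to be consistent, uniformly over all joint
pmfs. -/
theorem empirical_mutualInfo_achievability :
    ∀ ε > (0 : ℝ), ∃ C > (0 : ℝ), ∀ S n : ℕ, 2 ≤ S →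
      C * (S : ℝ) ^ 2 ≤ (n : ℝ) →
      (⨆ P : {P : Fin S × Fin S → ℝ // IsPmf P},
        expectIID P.1 (fun z : Fin n → Fin S × Fin S => (mutualInfo (empDist z) - mutualInfo P.1) ^ 2)) ≤ ε := by
  intro ε hε
  refine ⟨144 / ε, by positivity, fun S n hS hn => ?_⟩
  have hS1 : (1 : ℝ) ≤ S := by exact_mod_cast one_le_two.trans hS
  have hn_pos : (0 : ℝ) < n := lt_of_lt_of_le (by positivity) hn
  refine Real.iSup_le (fun P => ?_) hε.le
  calc _ ≤ 48 * ((S : ℝ) + S + S * S) / n := by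
        simpa using expectIID_sq_mutualInfo_empDist_sub_le P.2 (Nat.cast_pos.mp hn_pos)
    _ ≤ 144 * S ^ 2 / n := by
        gcongr ?_ / _
        nlinarith
    _ = 144 / ε * S ^ 2 * ε / n := by field_simp
    _ ≤ ε := by
        rw [div_le_iff₀ hn_pos, mul_comm ε]
        exact mul_le_mul_of_nonneg_right hn hε.le
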